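/- arXiv:2108.05338 — 2 statements merged into one kernel-verified Lean document; each statement's English description precedes it below -/
import Mathlib

section
/- If the feature matrix X has full column rank and γ^{n+1} < λ_min d_{μ,min} / ( d_{μ,max}² ‖γP_π − I‖ ‖m‖₁ ), where λ_min is the smallest eigenvalue of the symmetric matrix (1/2)( D_f(I − γP_π) + (I − γP_π^⊤) D_f ), then the matrix X^⊤ D_{f_n} (γP_π − I) X is negative definite. -/
open Matrix Finset

noncomputable section

/-- The truncated emphasis `m_n := Σ_{j=0}^n γ^j D_μ⁻¹ (P_π^⊤)^j D_μ i`. -/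
def truncEmph {S : Type} [Fintype S] [DecidableEq S]
    (γ : ℝ) (P : Matrix S S ℝ) (d i : S → ℝ) (n : ℕ) : S → ℝ :=
  fun s => ∑ j ∈ Finset.range (n + 1),
    γ ^ j * ((Matrix.diagonal fun s => (d s)⁻¹) * (Pᵀ) ^ j * Matrix.diagonal d).mulVec i s

/-- The emphasis `m := D_μ⁻¹ (I − γ P_π^⊤)⁻¹ D_μ i`. -/
def emph {S : Type} [Fintype S] [DecidableEq S]
    (γ : ℝ) (P : Matrix S S ℝ) (d i : S → ℝ) : S → ℝ :=
  ((Matrix.diagonal fun s => (d s)⁻¹) * (1 - γ • Pᵀ)⁻¹ * Matrix.diagonal d).mulVec i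

/-- The spectral norm (ℓ2 operator norm) of a real matrix. -/
def spec {m : Type} [Fintype m] {n : Type} [Fintype n] [DecidableEq n]
    (M : Matrix m n ℝ) : ℝ :=
  ‖LinearMap.toContinuousLinearMap (Matrix.toEuclideanLin M)‖

/-!
With `f_n = D_μ m_n` and `f = D_μ m`, summing the geometric series gives
`f_n - f = -γ^{n+1} (P_π^{n+1})ᵀ f`. Since `P_π^{n+1}` is row-stochastic, every entry of this
vector is at most `ε := γ^{n+1} d_{μ,max} ‖m‖₁` in absolute value. Splitting
`D_{f_n} = D_f + D_{f_n - f}`, the quadratic form of `D_{f_n} (I - γP_π)` at `u` is at least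
`λ_min ‖u‖²` (the symmetric part of `D_f (I - γP_π)`) minus `ε ‖I - γP_π‖ ‖u‖²`, and the bound on
`γ^{n+1}`, together with `d_{μ,min} ≤ d_{μ,max}`, makes `λ_min - ε ‖γP_π - I‖` positive. Finally
`‖X w‖² ≥ σ ‖w‖²` for some `σ > 0` because `X` is injective.
-/

namespace Matrix

variable {n : Type*} [Fintype n] [DecidableEq n]

theorem isUnit_one_sub_smul_of_mem_rowStochastic {P : Matrix n n ℝ}
    (hP : P ∈ rowStochastic ℝ n) {γ : ℝ} (hγ0 : 0 ≤ γ) (hγ1 : γ < 1) : IsUnit (1 - γ • P) := by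
  let _ := Matrix.linftyOpNormedRing (n := n) (α := ℝ)
  let _ := Matrix.linftyOpNormedAlgebra (R := ℝ) (n := n) (α := ℝ)
  have hP1 : ‖P‖ ≤ 1 := by
    rw [linfty_opNorm_def, NNReal.coe_le_one]
    refine Finset.sup_le fun s _ => ?_
    rw [← NNReal.coe_le_coe]
    push_cast
    simp only [Real.norm_eq_abs, abs_of_nonneg (nonneg_of_mem_rowStochastic hP),
      sum_row_of_mem_rowStochastic hP, le_refl]
  have hγP : ‖γ • P‖ < 1 := calc
    ‖γ • P‖ ≤ ‖γ‖ * ‖P‖ := norm_smul_le γ P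
    _ ≤ γ * 1 := by rw [Real.norm_of_nonneg hγ0]; gcongr
    _ < 1 := by linarith
  exact (Units.oneSub (γ • P) hγP).isUnit

theorem geom_sum_sub_nonsing_inv {R : Type*} [CommRing R] {A : Matrix n n R} (hA : IsUnit (1 - A)) (k : ℕ) :
    ∑ j ∈ range k, A ^ j - (1 - A)⁻¹ = -(A ^ k * (1 - A)⁻¹) := by
  have hdet : IsUnit (1 - A).det := (isUnit_iff_isUnit_det _).1 hA
  calc ∑ j ∈ range k, A ^ j - (1 - A)⁻¹
      = ((∑ j ∈ range k, A ^ j) * (1 - A) - 1) * (1 - A)⁻¹ := by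
        rw [sub_mul, Matrix.mul_assoc, mul_nonsing_inv _ hdet, Matrix.mul_one, one_mul]
    _ = -(A ^ k * (1 - A)⁻¹) := by rw [geom_sum_mul_neg, sub_sub_cancel_left, neg_mul]

theorem abs_transpose_mulVec_le_sum_abs {Q : Matrix n n ℝ} (hQ : Q ∈ rowStochastic ℝ n)
    (v : n → ℝ) (s : n) : |(Qᵀ *ᵥ v) s| ≤ ∑ t, |v t| :=
  calc |(Qᵀ *ᵥ v) s| ≤ ∑ t, |Q t s * v t| := abs_sum_le_sum_abs _ _
    _ ≤ ∑ t, |v t| := by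
      refine sum_le_sum fun t _ => ?_
      rw [abs_mul, abs_of_nonneg (nonneg_of_mem_rowStochastic hQ)]
      exact mul_le_of_le_one_left (abs_nonneg _) (le_one_of_mem_rowStochastic hQ)

omit [DecidableEq n] in
theorem dotProduct_self_eq_norm_sq (x : n → ℝ) : x ⬝ᵥ x = ‖WithLp.toLp 2 x‖ ^ 2 := by
  rw [EuclideanSpace.real_norm_sq_eq]
  simp [dotProduct, sq]

theorem exists_pos_mul_dotProduct_le_of_injective {m : Type*} [Fintype m] (X : Matrix m n ℝ)
    (hX : Function.Injective X.mulVec) :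
    ∃ σ > 0, ∀ w, σ * (w ⬝ᵥ w) ≤ (X *ᵥ w) ⬝ᵥ (X *ᵥ w) := by
  have hinj : Function.Injective (toEuclideanLin X) := fun x y hxy =>
    WithLp.ofLp_injective 2 (hX (congrArg WithLp.ofLp hxy))
  obtain ⟨K, -, hK⟩ := (toEuclideanLin X).injective_iff_antilipschitz.1 hinj
  obtain ⟨c, hc, hcX⟩ := antilipschitzWith_iff_exists_mul_le_norm.1 ⟨K, hK⟩
  refine ⟨c ^ 2, by positivity, fun w => ?_⟩
  rw [dotProduct_self_eq_norm_sq, dotProduct_self_eq_norm_sq, ← mul_pow]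
  exact pow_le_pow_left₀ (by positivity) (hcX (WithLp.toLp 2 w)) 2

open scoped Matrix.Norms.L2Operator in
theorem abs_dotProduct_mulVec_le_l2_opNorm_mul (A : Matrix n n ℝ) (u : n → ℝ) :
    |u ⬝ᵥ (A *ᵥ u)| ≤ ‖A‖ * (u ⬝ᵥ u) := by
  set x := WithLp.toLp 2 u
  calc |u ⬝ᵥ (A *ᵥ u)| = |inner ℝ x (toEuclideanCLM (𝕜 := ℝ) A x)| := by
        rw [inner_toEuclideanCLM]
    _ ≤ ‖x‖ * (‖A‖ * ‖x‖) :=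
        (abs_real_inner_le_norm _ _).trans (by gcongr; exact ContinuousLinearMap.le_opNorm _ _)
    _ = ‖A‖ * (u ⬝ᵥ u) := by rw [dotProduct_self_eq_norm_sq]; ring

theorem le_dotProduct_mulVec_of_mem_lowerBounds {C : Matrix n n ℝ} (hC : C.IsHermitian) {r : ℝ}
    (hr : r ∈ lowerBounds {x | ∃ v, v ≠ 0 ∧ C *ᵥ v = x • v}) (u : n → ℝ) :
    r * (u ⬝ᵥ u) ≤ u ⬝ᵥ (C *ᵥ u) := by
  have hspec : ∀ x ∈ spectrum ℝ C, r ≤ x := by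
    rw [hC.spectrum_real_eq_range_eigenvalues]
    rintro _ ⟨k, rfl⟩
    exact hr ⟨_, (hC.eigenvectorBasis.orthonormal.ne_zero k) ∘ (WithLp.ofLp_eq_zero 2).1,
      hC.mulVec_eigenvectorBasis k⟩
  -- `r • 1 ≤ C` in the Loewner order, i.e. `C - r • 1` is positive semidefinite
  open scoped MatrixOrder in
  have h := ((algebraMap_le_iff_le_spectrum (a := C) hC.isSelfAdjoint).2 hspec)
  have := (Matrix.le_iff.1 h).dotProduct_mulVec_nonneg u
  simpa [Algebra.algebraMap_eq_smul_one, sub_mulVec, smul_mulVec, dotProduct_sub, sub_nonneg]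
    using this

omit [DecidableEq n] in
theorem dotProduct_half_smul_add_transpose_mulVec (A : Matrix n n ℝ) (u : n → ℝ) :
    u ⬝ᵥ (((1 / 2 : ℝ) • (A + Aᵀ)) *ᵥ u) = u ⬝ᵥ (A *ᵥ u) := by
  rw [smul_mulVec, add_mulVec, dotProduct_smul, dotProduct_add, dotProduct_transpose_mulVec,
    smul_eq_mul]
  ring

omit [Fintype n] [DecidableEq n] in
theorem isHermitian_half_smul_add_transpose (A : Matrix n n ℝ) :
    ((1 / 2 : ℝ) • (A + Aᵀ)).IsHermitian := by
  rw [← conjTranspose_eq_transpose_of_trivial]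
  exact (isHermitian_add_transpose_self A).smul (IsSelfAdjoint.all _)

omit [DecidableEq n] in
theorem dotProduct_transpose_mul_mul_mulVec {R : Type*} [CommRing R] {m : Type*} [Fintype m]
    (X : Matrix m n R) (M : Matrix m m R) (w : n → R) :
    w ⬝ᵥ ((Xᵀ * M * X) *ᵥ w) = (X *ᵥ w) ⬝ᵥ (M *ᵥ (X *ᵥ w)) := by
  rw [← mulVec_mulVec, ← mulVec_mulVec, dotProduct_mulVec, vecMul_transpose]

end Matrix

open scoped Matrix.Norms.L2Operator in
theorem spec_eq_l2_opNorm {n : Type} [Fintype n] [DecidableEq n] (A : Matrix n n ℝ) :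
    spec A = ‖A‖ :=
  rfl

open scoped Matrix.Norms.L2Operator in
theorem spec_neg {n : Type} [Fintype n] [DecidableEq n] (A : Matrix n n ℝ) :
    spec (-A) = spec A := by
  rw [spec_eq_l2_opNorm, spec_eq_l2_opNorm, norm_neg]

theorem spec_nonneg {m n : Type} [Fintype m] [Fintype n] [DecidableEq n] (A : Matrix m n ℝ) :
    0 ≤ spec A :=
  norm_nonneg _

open scoped Matrix.Norms.L2Operator in
/-- Here `‖g - f‖` is the sup norm of a vector. -/
theorem le_dotProduct_diagonal_mul_mulVec {n : Type} [Fintype n] [DecidableEq n]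
    {B : Matrix n n ℝ} {f : n → ℝ} {r : ℝ}
    (hr : r ∈ lowerBounds
      {x | ∃ v, v ≠ 0 ∧ ((1 / 2 : ℝ) • (diagonal f * B + Bᵀ * diagonal f)) *ᵥ v = x • v})
    (g u : n → ℝ) :
    (r - ‖g - f‖ * spec B) * (u ⬝ᵥ u) ≤ u ⬝ᵥ ((diagonal g * B) *ᵥ u) := by
  have hsym : (diagonal f * B)ᵀ = Bᵀ * diagonal f := by rw [transpose_mul, diagonal_transpose]
  have hmain : r * (u ⬝ᵥ u) ≤ u ⬝ᵥ ((diagonal f * B) *ᵥ u) := by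
    rw [← dotProduct_half_smul_add_transpose_mulVec, hsym]
    refine le_dotProduct_mulVec_of_mem_lowerBounds ?_ hr u
    simpa only [hsym] using isHermitian_half_smul_add_transpose (diagonal f * B)
  have hpert : |u ⬝ᵥ ((diagonal (g - f) * B) *ᵥ u)| ≤ ‖g - f‖ * spec B * (u ⬝ᵥ u) := by
    refine (abs_dotProduct_mulVec_le_l2_opNorm_mul _ u).trans ?_
    rw [spec_eq_l2_opNorm, ← l2_opNorm_diagonal]
    exact mul_le_mul_of_nonneg_right (l2_opNorm_mul _ _) (dotProduct_self_star_nonneg u)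
  have hsplit : diagonal g * B = diagonal f * B + diagonal (g - f) * B := by
    rw [← add_mul, diagonal_add]; simp
  rw [hsplit, add_mulVec, dotProduct_add]
  linarith [neg_abs_le (u ⬝ᵥ ((diagonal (g - f) * B) *ᵥ u))]

section Emphasis

variable {S : Type} [Fintype S] [DecidableEq S] (γ : ℝ) (P : Matrix S S ℝ) {d : S → ℝ}
  (i : S → ℝ)

theorem truncEmph_eq (n : ℕ) :
    truncEmph γ P d i n =
      (diagonal (fun s => (d s)⁻¹) * (∑ j ∈ range (n + 1), (γ • Pᵀ) ^ j) * diagonal d) *ᵥ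
        i := by
  ext s
  simp only [truncEmph, Matrix.mul_sum, Matrix.sum_mul, sum_mulVec, Finset.sum_apply, smul_pow,
    Matrix.mul_smul, Matrix.smul_mul, smul_mulVec, Pi.smul_apply, smul_eq_mul]

theorem weighted_conj_diagonal_mulVec (hd : ∀ s, d s ≠ 0) (M : Matrix S S ℝ) :
    (fun s => d s * ((diagonal (fun s => (d s)⁻¹) * M * diagonal d) *ᵥ i) s) =
      (M * diagonal d) *ᵥ i := by
  ext s
  rw [Matrix.mul_assoc, ← mulVec_mulVec, mulVec_diagonal, ← mul_assoc, mul_inv_cancel₀ (hd s),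
    one_mul]

theorem weighted_truncEmph_sub_weighted_emph (hγ0 : 0 ≤ γ) (hγ1 : γ < 1)
    (hP : P ∈ rowStochastic ℝ S) (hd : ∀ s, d s ≠ 0) (n : ℕ) :
    (fun s => d s * truncEmph γ P d i n s) - (fun s => d s * emph γ P d i s) =
      -(γ ^ (n + 1) • ((P ^ (n + 1))ᵀ *ᵥ fun s => d s * emph γ P d i s)) := by
  have hunit : IsUnit (1 - γ • Pᵀ) := by
    simpa using (isUnit_transpose _).2 (isUnit_one_sub_smul_of_mem_rowStochastic hP hγ0 hγ1)
  rw [truncEmph_eq, emph, weighted_conj_diagonal_mulVec i hd, weighted_conj_diagonal_mulVec i hd,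
    ← sub_mulVec, ← Matrix.sub_mul, geom_sum_sub_nonsing_inv hunit]
  simp [smul_pow, transpose_pow, neg_mulVec, mulVec_mulVec, Matrix.mul_assoc, smul_mulVec]

theorem norm_weighted_truncEmph_sub_weighted_emph_le (hγ0 : 0 ≤ γ) (hγ1 : γ < 1)
    (hP : P ∈ rowStochastic ℝ S) (hd : ∀ s, 0 < d s) {dmax : ℝ}
    (hdmax : IsGreatest (Set.range d) dmax) (n : ℕ) :
    ‖(fun s => d s * truncEmph γ P d i n s) - (fun s => d s * emph γ P d i s)‖ ≤
      γ ^ (n + 1) * dmax * ∑ s, |emph γ P d i s| := by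
  obtain ⟨⟨s₀, rfl⟩, hle⟩ := hdmax
  rw [weighted_truncEmph_sub_weighted_emph γ P i hγ0 hγ1 hP (fun s => (hd s).ne'), norm_neg]
  refine (pi_norm_le_iff_of_nonneg (by have := hd s₀; positivity)).2 fun s => ?_
  rw [Pi.smul_apply, smul_eq_mul, Real.norm_eq_abs, abs_mul, abs_of_nonneg (by positivity),
    mul_assoc]
  gcongr
  calc |((P ^ (n + 1))ᵀ *ᵥ fun s => d s * emph γ P d i s) s|
      ≤ ∑ t, |d t * emph γ P d i t| := abs_transpose_mulVec_le_sum_abs (pow_mem hP _) _ s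
    _ ≤ ∑ t, d s₀ * |emph γ P d i t| := by
        gcongr with t
        rw [abs_mul, abs_of_pos (hd t)]
        gcongr
        exact hle ⟨t, rfl⟩
    _ = d s₀ * ∑ t, |emph γ P d i t| := (mul_sum _ _ _).symm

end Emphasis

theorem mul_mul_mul_lt_of_lt_div {g l a b x y : ℝ} (hg : 0 ≤ g) (hb : 0 < b) (hba : b ≤ a)
    (hx : 0 ≤ x) (hy : 0 ≤ y) (h : g < l * b / (a ^ 2 * x * y)) : g * a * y * x < l := by
  have hden : 0 < a ^ 2 * x * y := by
    refine (by positivity : 0 ≤ a ^ 2 * x * y).lt_of_ne fun h0 => ?_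
    rw [← h0, div_zero] at h
    exact h.not_ge hg
  rw [lt_div_iff₀ hden] at h
  refine lt_of_mul_lt_mul_right (lt_of_le_of_lt ?_ h) hb.le
  have ha : 0 < a := hb.trans_le hba
  calc g * a * y * x * b ≤ g * a * y * x * a := mul_le_mul_of_nonneg_left hba (by positivity)
    _ = g * (a ^ 2 * x * y) := by ring

theorem truncated_emphasis_negative_definite_general
    {S : Type} [Fintype S] [DecidableEq S] {K : ℕ}
    (γ : ℝ) (hγ0 : 0 ≤ γ) (hγ1 : γ < 1)
    (P : Matrix S S ℝ) (hP0 : ∀ s s', 0 ≤ P s s') (hP1 : ∀ s, ∑ s', P s s' = 1)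
    (d : S → ℝ) (hd : ∀ s, 0 < d s)
    (i : S → ℝ)
    (dmax dmin : ℝ)
    (hdmax : IsGreatest (Set.range d) dmax) (hdmin : IsLeast (Set.range d) dmin)
    (n : ℕ)
    (lammin : ℝ)
    (hlam : IsLeast {r : ℝ | ∃ v : S → ℝ, v ≠ 0 ∧
        (((1 : ℝ)/2) • (Matrix.diagonal (fun s => d s * emph γ P d i s) * (1 - γ • P) +
          (1 - γ • Pᵀ) * Matrix.diagonal (fun s => d s * emph γ P d i s))).mulVec v = r • v}
      lammin)
    (X : Matrix S (Fin K) ℝ) (hX : Function.Injective X.mulVec)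
    (hn : γ ^ (n + 1) <
      lammin * dmin / (dmax ^ 2 * spec (γ • P - 1) * ∑ s, |emph γ P d i s|)) :
    ∃ lam > (0 : ℝ), ∀ w : Fin K → ℝ,
      (∑ k, w k * ((Xᵀ * Matrix.diagonal (fun s => d s * truncEmph γ P d i n s) *
        (γ • P - 1) * X).mulVec w) k) ≤ -lam * ∑ k, (w k) ^ 2 := by
  have hP : P ∈ rowStochastic ℝ S := mem_rowStochastic_iff_sum.2 ⟨hP0, hP1⟩
  rw [← neg_sub (1 : Matrix S S ℝ), spec_neg] at hn
  set ε := γ ^ (n + 1) * dmax * ∑ s, |emph γ P d i s|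
  have hδ : ‖_‖ ≤ ε := norm_weighted_truncEmph_sub_weighted_emph_le γ P i hγ0 hγ1 hP hd hdmax n
  obtain ⟨⟨s, rfl⟩, -⟩ := hdmin
  have hgap : ε * spec (1 - γ • P) < lammin :=
    mul_mul_mul_lt_of_lt_div (pow_nonneg hγ0 _) (hd s) (hdmax.2 ⟨s, rfl⟩) (spec_nonneg _)
      (by positivity) hn
  rw [show 1 - γ • Pᵀ = (1 - γ • P)ᵀ by rw [transpose_sub, transpose_one, transpose_smul]] at hlam
  obtain ⟨σ, hσ, hXσ⟩ := exists_pos_mul_dotProduct_le_of_injective X hX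
  refine ⟨(lammin - ε * spec (1 - γ • P)) * σ, mul_pos (by linarith) hσ, fun w => ?_⟩
  have hq := le_dotProduct_diagonal_mul_mulVec hlam.2
    (fun s => d s * truncEmph γ P d i n s) (X *ᵥ w)
  calc _ = -((X *ᵥ w) ⬝ᵥ ((diagonal (fun s => d s * truncEmph γ P d i n s) * (1 - γ • P)) *ᵥ
        (X *ᵥ w))) := by
        change w ⬝ᵥ _ = _
        rw [← neg_sub (1 : Matrix S S ℝ), Matrix.mul_neg, Matrix.neg_mul, neg_mulVec,
          dotProduct_neg, Matrix.mul_assoc Xᵀ, dotProduct_transpose_mul_mul_mulVec]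
    _ ≤ -((lammin - ε * spec (1 - γ • P)) * ((X *ᵥ w) ⬝ᵥ (X *ᵥ w))) := by
        refine neg_le_neg (hq.trans' ?_)
        gcongr
        exacts [dotProduct_self_star_nonneg _, spec_nonneg _]
    _ ≤ -((lammin - ε * spec (1 - γ • P)) * (σ * (w ⬝ᵥ w))) :=
        neg_le_neg (mul_le_mul_of_nonneg_left (hXσ w) (by linarith))
    _ = -((lammin - ε * spec (1 - γ • P)) * σ) * ∑ k, w k ^ 2 := by
        simp only [dotProduct, sq]
        ring

/-- if `X` has full column rank and
`γ^{n+1} < λ_min d_min / (d_max² ‖γP − I‖ ‖m‖₁)`, then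
`Xᵀ D_{f_n} (γP − I) X` is negative definite. -/
theorem truncated_emphasis_negative_definite
    {S : Type} [Fintype S] [DecidableEq S] {K : ℕ}
    (γ : ℝ) (hγ0 : 0 ≤ γ) (hγ1 : γ < 1)
    (P : Matrix S S ℝ) (hP0 : ∀ s s', 0 ≤ P s s') (hP1 : ∀ s, ∑ s', P s s' = 1)
    (d : S → ℝ) (hd : ∀ s, 0 < d s) (hdsum : ∑ s, d s = 1)
    (i : S → ℝ) (hi : ∀ s, 0 < i s)
    (dmax dmin : ℝ)
    (hdmax : IsGreatest (Set.range d) dmax) (hdmin : IsLeast (Set.range d) dmin)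
    (n : ℕ)
    (lammin : ℝ)
    (hlam : IsLeast {r : ℝ | ∃ v : S → ℝ, v ≠ 0 ∧
        (((1 : ℝ)/2) • (Matrix.diagonal (fun s => d s * emph γ P d i s) * (1 - γ • P) +
          (1 - γ • Pᵀ) * Matrix.diagonal (fun s => d s * emph γ P d i s))).mulVec v = r • v}
      lammin)
    (X : Matrix S (Fin K) ℝ) (hX : Function.Injective X.mulVec)
    (hn : γ ^ (n + 1) <
      lammin * dmin / (dmax ^ 2 * spec (γ • P - 1) * ∑ s, |emph γ P d i s|)) :
    ∃ lam > (0 : ℝ), ∀ w : Fin K → ℝ,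
      (∑ k, w k * ((Xᵀ * Matrix.diagonal (fun s => d s * truncEmph γ P d i n s) *
        (γ • P - 1) * X).mulVec w) k) ≤ -lam * ∑ k, (w k) ^ 2 :=
  truncated_emphasis_negative_definite_general γ hγ0 hγ1 P hP0 hP1 d hd i dmax dmin hdmax hdmin n
    lammin hlam X hX hn
end
end

section
/- If γ^{n+1} < κ d_{μ,min} min_s( i(s) d_μ(s) ) / ( d_{μ,max}² ‖I − γP_π^⊤‖_∞ ‖m‖₁ ), where κ := min_s d_μ(s) i(s) / f(s), and the feature matrix X has full column rank, then the projected Bellman operator Π_{f_n} T_π is a √γ-contraction in the norm ‖·‖_{f_n}: for all v₁, v₂ ∈ ℝ^S, ‖Π_{f_n} T_π v₁ − Π_{f_n} T_π v₂‖_{f_n} ≤ √γ ‖v₁ − v₂‖_{f_n}. -/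
/-!
Write `q := d_μ ⊙ i` and `f_n = Σ_{j ≤ n} (γ P_πᵀ)^j q`. Telescoping gives
`γ P_πᵀ f_n = f_n + (γ P_πᵀ)^{n+1} q − q`, and `(γ P_πᵀ)^{n+1} q ≤ γ^{n+1} Σ q`; so `f_n` is
subinvariant, `γ P_πᵀ f_n ≤ f_n`, as soon as `γ^{n+1} Σ q ≤ min q`. Subinvariance together with
Jensen's inequality `(P_π u)² ≤ P_π (u²)` makes `u ↦ γ P_π u` a `√γ`-contraction in `‖·‖_{f_n}`,
and `Π_{f_n}`, an `f_n`-orthogonal projection, is nonexpansive.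

The truncation condition implies `γ^{n+1} Σ q < min q`: since `(I − γ P_πᵀ)(D_μ m) = q` and every
column of `I − γ P_πᵀ` sums to `1 − γ ≤ ‖I − γ P_πᵀ‖_∞`, we get
`Σ q = (1 − γ) Σ D_μ m ≤ ‖I − γ P_πᵀ‖_∞ d_{μ,max} ‖m‖₁`, and `κ ≤ 1` because `Σ D_μ m ≥ Σ q`.
-/

open Matrix Finset

noncomputable section

section WeightedNorm

variable {S : Type*} [Fintype S]

def weightedSqNorm (W v : S → ℝ) : ℝ := ∑ s, W s * v s ^ 2

variable {W : S → ℝ} {V : Submodule ℝ (S → ℝ)}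

lemma weightedSqNorm_nonneg (hW : 0 ≤ W) (v : S → ℝ) : 0 ≤ weightedSqNorm W v :=
  sum_nonneg fun s _ => mul_nonneg (hW s) (sq_nonneg _)

lemma weightedSqNorm_add (W u v : S → ℝ) : weightedSqNorm W (u + v) =
    weightedSqNorm W u + 2 * ∑ s, W s * (u s * v s) + weightedSqNorm W v := by
  simp only [weightedSqNorm, mul_sum, ← sum_add_distrib]
  exact sum_congr rfl fun s _ => by simp only [Pi.add_apply]; ring

lemma sum_mul_residual_mul_eq_zero {p v : S → ℝ} (hp : p ∈ V)
    (hmin : ∀ y ∈ V, weightedSqNorm W (p - v) ≤ weightedSqNorm W (y - v)) {y : S → ℝ}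
    (hy : y ∈ V) : ∑ s, W s * ((p s - v s) * y s) = 0 := by
  -- `t ↦ ‖p + t y - v‖²_W` is minimal at `t = 0`, so its linear coefficient vanishes.
  have hquad : ∀ t : ℝ, 0 ≤ weightedSqNorm W y * (t * t) +
      2 * (∑ s, W s * ((p s - v s) * y s)) * t + 0 := by
    intro t
    have h := hmin (p + t • y) (V.add_mem hp (V.smul_mem t hy))
    rw [show p + t • y - v = (p - v) + t • y by abel, weightedSqNorm_add] at h
    simp only [weightedSqNorm, Pi.smul_apply, smul_eq_mul, Pi.sub_apply] at h ⊢
    have e1 : ∑ s, W s * ((p s - v s) * (t * y s)) = (∑ s, W s * ((p s - v s) * y s)) * t := by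
      rw [sum_mul]; exact sum_congr rfl fun s _ => by ring
    have e2 : ∑ s, W s * (t * y s) ^ 2 = (∑ s, W s * y s ^ 2) * (t * t) := by
      rw [sum_mul]; exact sum_congr rfl fun s _ => by ring
    rw [e1, e2] at h
    linarith
  have := discrim_le_zero hquad
  rw [discrim] at this
  nlinarith [sq_nonneg (∑ s, W s * ((p s - v s) * y s))]

lemma weightedSqNorm_map_sub_le (hW : 0 ≤ W) {Proj : (S → ℝ) → (S → ℝ)}
    (hmem : ∀ v, Proj v ∈ V)
    (hmin : ∀ v, ∀ y ∈ V, weightedSqNorm W (Proj v - v) ≤ weightedSqNorm W (y - v))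
    (a b : S → ℝ) : weightedSqNorm W (Proj a - Proj b) ≤ weightedSqNorm W (a - b) := by
  have he : Proj a - Proj b ∈ V := V.sub_mem (hmem a) (hmem b)
  have hortho : ∑ s, W s * (((a - Proj a) - (b - Proj b)) s * (Proj a - Proj b) s) = 0 := by
    calc _ = ∑ s, W s * ((Proj b s - b s) * (Proj a - Proj b) s) -
          ∑ s, W s * ((Proj a s - a s) * (Proj a - Proj b) s) := by
          rw [← sum_sub_distrib]
          exact sum_congr rfl fun s _ => by simp only [Pi.sub_apply]; ring
      _ = 0 := by
          rw [sum_mul_residual_mul_eq_zero (hmem a) (hmin a) he,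
            sum_mul_residual_mul_eq_zero (hmem b) (hmin b) he, sub_zero]
  -- Pythagoras: `a - b` is `Proj a - Proj b` plus a `W`-orthogonal difference of residuals.
  have hpyth := weightedSqNorm_add W ((a - Proj a) - (b - Proj b)) (Proj a - Proj b)
  rw [hortho, show (a - Proj a) - (b - Proj b) + (Proj a - Proj b) = a - b by abel] at hpyth
  linarith [weightedSqNorm_nonneg hW ((a - Proj a) - (b - Proj b))]

end WeightedNorm

namespace Matrix

variable {S : Type*} [Fintype S] [DecidableEq S]

lemma mulVec_geom_sum_mulVec {R : Type*} [CommRing R] (Q : Matrix S S R) (q : S → R) (N : ℕ) :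
    Q *ᵥ ((∑ j ∈ range N, Q ^ j) *ᵥ q) = (∑ j ∈ range N, Q ^ j) *ᵥ q + Q ^ N *ᵥ q - q := by
  have h := mul_geom_sum Q N
  rw [sub_mul, one_mul, sub_eq_iff_eq_add] at h
  rw [mulVec_mulVec, h, add_mulVec, sub_mulVec, one_mulVec]
  abel

lemma mulVec_geom_sum_mulVec_le {R : Type*} [CommRing R] [PartialOrder R]
    [IsOrderedAddMonoid R] {Q : Matrix S S R} {q : S → R} {N : ℕ} (h : Q ^ N *ᵥ q ≤ q) :
    Q *ᵥ ((∑ j ∈ range N, Q ^ j) *ᵥ q) ≤ (∑ j ∈ range N, Q ^ j) *ᵥ q := by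
  rwa [mulVec_geom_sum_mulVec, add_sub_assoc, add_le_iff_nonpos_right, sub_nonpos]

lemma diagonal_mulVec_eq_mul {R : Type*} [CommSemiring R] (d i : S → R) :
    diagonal d *ᵥ i = d * i :=
  funext (mulVec_diagonal d i)

omit [Fintype S] in
lemma one_sub_smul_transpose_apply_self {R : Type*} [CommRing R] (γ : R) (P : Matrix S S R)
    (k : S) : (1 - γ • Pᵀ) k k = 1 - γ * P k k := by
  simp

lemma smul_transpose_pow {R : Type*} [CommSemiring R] (γ : R) (P : Matrix S S R) (j : ℕ) :
    (γ • Pᵀ) ^ j = γ ^ j • (P ^ j)ᵀ := by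
  rw [smul_pow, transpose_pow]

variable {P : Matrix S S ℝ}

lemma sq_mulVec_le_mulVec_sq (hP : P ∈ rowStochastic ℝ S) (u : S → ℝ) (s : S) :
    (P *ᵥ u) s ^ 2 ≤ (P *ᵥ u ^ 2) s :=
  (even_two.convexOn_pow (𝕜 := ℝ)).map_sum_le (fun _ _ => nonneg_of_mem_rowStochastic hP)
    (sum_row_of_mem_rowStochastic hP s) (fun _ _ => Set.mem_univ _)

lemma transpose_mulVec_le_sum (hP : P ∈ rowStochastic ℝ S) {q : S → ℝ} (hq : 0 ≤ q) (s : S) :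
    (Pᵀ *ᵥ q) s ≤ ∑ t, q t := by
  simp only [mulVec, dotProduct, transpose_apply]
  exact sum_le_sum fun t _ =>
    mul_le_of_le_one_left (hq t) (le_one_of_mem_rowStochastic hP)

lemma smul_transpose_pow_mulVec_nonneg (hP : P ∈ rowStochastic ℝ S) {γ : ℝ} (hγ : 0 ≤ γ)
    {q : S → ℝ} (hq : 0 ≤ q) (j : ℕ) : 0 ≤ (γ • Pᵀ) ^ j *ᵥ q := by
  rw [smul_transpose_pow, smul_mulVec]
  exact smul_nonneg (pow_nonneg hγ j) (nonneg_mulVec_of_mem_colStochastic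
    (transpose_mem_colStochastic_iff_mem_rowStochastic.2 (pow_mem hP j)) hq)

lemma smul_transpose_pow_mulVec_le (hP : P ∈ rowStochastic ℝ S) {γ : ℝ} (hγ : 0 ≤ γ)
    {q : S → ℝ} (hq : 0 ≤ q) (j : ℕ) (s : S) : ((γ • Pᵀ) ^ j *ᵥ q) s ≤ γ ^ j * ∑ t, q t := by
  rw [smul_transpose_pow, smul_mulVec, Pi.smul_apply, smul_eq_mul]
  exact mul_le_mul_of_nonneg_left (transpose_mulVec_le_sum (pow_mem hP j) hq s) (pow_nonneg hγ j)

lemma det_one_sub_smul_transpose_ne_zero (hP : P ∈ rowStochastic ℝ S) {γ : ℝ} (hγ0 : 0 ≤ γ)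
    (hγ1 : γ < 1) : (1 - γ • Pᵀ).det ≠ 0 := by
  refine det_ne_zero_of_sum_col_lt_diag fun k => ?_
  have hoff : ∑ i ∈ univ.erase k, ‖(1 - γ • Pᵀ) i k‖ = γ * (1 - P k k) := by
    rw [← sum_row_of_mem_rowStochastic hP k, ← add_sum_erase _ _ (mem_univ k),
      add_sub_cancel_left, mul_sum]
    refine sum_congr rfl fun i hi => ?_
    simp [one_apply_ne (ne_of_mem_erase hi), abs_of_nonneg hγ0,
      abs_of_nonneg (nonneg_of_mem_rowStochastic hP)]
  have hPkk : P k k ≤ 1 := le_one_of_mem_rowStochastic hP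
  rw [hoff, Real.norm_eq_abs, one_sub_smul_transpose_apply_self, abs_of_nonneg (by nlinarith)]
  nlinarith

lemma one_sub_le_sum_abs_one_sub_smul_transpose (hP : P ∈ rowStochastic ℝ S) {γ : ℝ}
    (hγ : 0 ≤ γ) (k : S) : 1 - γ ≤ ∑ s, |(1 - γ • Pᵀ) k s| := by
  have : γ * P k k ≤ γ := mul_le_of_le_one_right hγ (le_one_of_mem_rowStochastic hP)
  calc 1 - γ ≤ |(1 - γ • Pᵀ) k k| := by
        rw [one_sub_smul_transpose_apply_self]; exact (sub_le_sub_left this 1).trans (le_abs_self _)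
    _ ≤ ∑ s, |(1 - γ • Pᵀ) k s| :=
        single_le_sum (f := fun s => |(1 - γ • Pᵀ) k s|) (fun _ _ => abs_nonneg _) (mem_univ k)

lemma weightedSqNorm_smul_mulVec_le (hP : P ∈ rowStochastic ℝ S) {γ : ℝ} (hγ : 0 ≤ γ)
    {W : S → ℝ} (hW : 0 ≤ W) (hsub : (γ • Pᵀ) *ᵥ W ≤ W) (u : S → ℝ) :
    weightedSqNorm W (γ • P *ᵥ u) ≤ γ * weightedSqNorm W u := by
  have hswap : W ⬝ᵥ (P *ᵥ u ^ 2) = (Pᵀ *ᵥ W) ⬝ᵥ u ^ 2 := by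
    rw [dotProduct_mulVec, mulVec_transpose]
  calc weightedSqNorm W (γ • P *ᵥ u) = γ * (γ * ∑ s, W s * (P *ᵥ u) s ^ 2) := by
        simp only [weightedSqNorm, mul_sum, Pi.smul_apply, smul_eq_mul]
        exact sum_congr rfl fun s _ => by ring
    _ ≤ γ * (γ * (W ⬝ᵥ (P *ᵥ u ^ 2))) := by
        gcongr
        exact sum_le_sum fun s _ =>
          mul_le_mul_of_nonneg_left (sq_mulVec_le_mulVec_sq hP u s) (hW s)
    _ = γ * (((γ • Pᵀ) *ᵥ W) ⬝ᵥ u ^ 2) := by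
        rw [hswap, smul_mulVec, smul_dotProduct, smul_eq_mul]
    _ ≤ γ * weightedSqNorm W u := by
        gcongr
        exact sum_le_sum fun s _ => mul_le_mul_of_nonneg_right (hsub s) (sq_nonneg (u s))

end Matrix

section Emphasis

variable {S : Type} [Fintype S] [DecidableEq S] {γ : ℝ} {P : Matrix S S ℝ} {d i : S → ℝ}

lemma mul_truncEmph (hd : ∀ s, d s ≠ 0) (n : ℕ) :
    d * truncEmph γ P d i n = (∑ j ∈ range (n + 1), (γ • Pᵀ) ^ j) *ᵥ (d * i) := by
  ext s
  simp [truncEmph, sum_mulVec, ← mulVec_mulVec, diagonal_mulVec_eq_mul, smul_pow, smul_mulVec,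
    mul_sum, hd, mul_left_comm (d s)]

lemma mul_emph (hd : ∀ s, d s ≠ 0) :
    d * emph γ P d i = (1 - γ • Pᵀ)⁻¹ *ᵥ (d * i) := by
  ext s
  simp [emph, ← mulVec_mulVec, diagonal_mulVec_eq_mul, hd]

lemma one_sub_mul_sum_mul_emph (hP : P ∈ rowStochastic ℝ S) (hγ0 : 0 ≤ γ) (hγ1 : γ < 1)
    (hd : ∀ s, d s ≠ 0) : (1 - γ) * ∑ s, d s * emph γ P d i s = ∑ s, d s * i s := by
  have hdet := det_one_sub_smul_transpose_ne_zero hP hγ0 hγ1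
  have hfix : (1 - γ • Pᵀ) *ᵥ (d * emph γ P d i) = d * i := by
    rw [mul_emph hd, mulVec_mulVec, mul_nonsing_inv _ (isUnit_iff_ne_zero.2 hdet), one_mulVec]
  -- the columns of `1 - γ Pᵀ` all sum to `1 - γ`
  have hcol := sum_mulVec_of_mem_colStochastic (x := d * emph γ P d i)
    (transpose_mem_colStochastic_iff_mem_rowStochastic.2 hP)
  calc (1 - γ) * ∑ s, d s * emph γ P d i s
      = ∑ s, ((1 - γ • Pᵀ) *ᵥ (d * emph γ P d i)) s := by
        simp only [sub_mulVec, one_mulVec, smul_mulVec, Pi.sub_apply, Pi.smul_apply, smul_eq_mul,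
          sum_sub_distrib, ← mul_sum, hcol, Pi.mul_apply]
        ring
    _ = ∑ s, d s * i s := by rw [hfix]; rfl

lemma le_one_of_mem_lowerBounds_div_mul_emph [Nonempty S] (hP : P ∈ rowStochastic ℝ S)
    (hγ0 : 0 ≤ γ) (hγ1 : γ < 1) (hd : ∀ s, 0 < d s) (hi : ∀ s, 0 < i s) {κ : ℝ}
    (hκ : κ ∈ lowerBounds (Set.range fun s => d s * i s / (d s * emph γ P d i s))) : κ ≤ 1 := by
  by_contra! hκ1
  have hlt : ∀ s, d s * emph γ P d i s < d s * i s := by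
    intro s
    have h : 1 < d s * i s / (d s * emph γ P d i s) := hκ1.trans_le (hκ ⟨s, rfl⟩)
    have hpos : 0 < d s * emph γ P d i s := by
      by_contra! hle
      exact absurd h (not_lt.2 ((div_nonpos_of_nonneg_of_nonpos (mul_pos (hd s) (hi s)).le
        hle).trans zero_le_one))
    rwa [one_lt_div hpos] at h
  have hsum := one_sub_mul_sum_mul_emph (i := i) hP hγ0 hγ1 fun s => (hd s).ne'
  have hsum_lt := sum_lt_sum_of_nonempty univ_nonempty fun s _ => hlt s
  have hdi : 0 < ∑ s, d s * i s := sum_pos (fun s _ => mul_pos (hd s) (hi s)) univ_nonempty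
  nlinarith

lemma sum_mul_le_mul_sum_abs_emph (hP : P ∈ rowStochastic ℝ S) (hγ0 : 0 ≤ γ) (hγ1 : γ < 1)
    (hd : ∀ s, 0 < d s) {dmax : ℝ} (hdmax : dmax ∈ upperBounds (Set.range d)) {N : ℝ}
    (hN : 1 - γ ≤ N) : ∑ s, d s * i s ≤ N * (dmax * ∑ s, |emph γ P d i s|) := by
  have hF : ∑ s, |d s * emph γ P d i s| ≤ dmax * ∑ s, |emph γ P d i s| := by
    rw [mul_sum]
    refine sum_le_sum fun s _ => ?_
    rw [abs_mul, abs_of_pos (hd s)]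
    exact mul_le_mul_of_nonneg_right (hdmax ⟨s, rfl⟩) (abs_nonneg _)
  rw [← one_sub_mul_sum_mul_emph hP hγ0 hγ1 fun s => (hd s).ne']
  calc (1 - γ) * ∑ s, d s * emph γ P d i s ≤ (1 - γ) * ∑ s, |d s * emph γ P d i s| :=
        mul_le_mul_of_nonneg_left (sum_le_sum fun s _ => le_abs_self _) (by linarith)
    _ ≤ N * ∑ s, |d s * emph γ P d i s| :=
        mul_le_mul_of_nonneg_right hN (sum_nonneg fun s _ => abs_nonneg _)
    _ ≤ N * (dmax * ∑ s, |emph γ P d i s|) := mul_le_mul_of_nonneg_left hF (by linarith)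

lemma pow_succ_mul_sum_mul_lt (hP : P ∈ rowStochastic ℝ S) (hγ0 : 0 ≤ γ) (hγ1 : γ < 1)
    (hd : ∀ s, 0 < d s) (hi : ∀ s, 0 < i s) {dmax dmin : ℝ}
    (hdmax : dmax ∈ upperBounds (Set.range d)) (hdmin : IsLeast (Set.range d) dmin) {κ : ℝ}
    (hκ : κ ∈ lowerBounds (Set.range fun s => d s * i s / (d s * emph γ P d i s))) {idmin : ℝ}
    (hidmin : idmin ∈ Set.range fun s => i s * d s) {ninf : ℝ}
    (hninf : ninf ∈ upperBounds (Set.range fun s => ∑ s', |(1 - γ • Pᵀ) s s'|)) {n : ℕ}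
    (hn : γ ^ (n + 1) < κ * dmin * idmin / (dmax ^ 2 * ninf * ∑ s, |emph γ P d i s|)) :
    γ ^ (n + 1) * ∑ s, d s * i s < idmin := by
  obtain ⟨s₀, hs₀⟩ := hdmin.1
  have : Nonempty S := ⟨s₀⟩
  have hN : 1 - γ ≤ ninf :=
    (one_sub_le_sum_abs_one_sub_smul_transpose hP hγ0 s₀).trans (hninf ⟨s₀, rfl⟩)
  have hκ1 := le_one_of_mem_lowerBounds_div_mul_emph hP hγ0 hγ1 hd hi hκ
  have hdmin0 : 0 < dmin := hs₀ ▸ hd s₀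
  have hdmin_le : dmin ≤ dmax := hs₀ ▸ hdmax ⟨s₀, rfl⟩
  have hq0 : 0 ≤ ∑ s, d s * i s := sum_nonneg fun s _ => (mul_pos (hd s) (hi s)).le
  have hidmin0 : 0 < idmin := by
    obtain ⟨s, rfl⟩ := hidmin
    exact mul_pos (hi s) (hd s)
  have hbound : κ * dmin * ∑ s, d s * i s ≤ dmax ^ 2 * ninf * ∑ s, |emph γ P d i s| :=
    calc κ * dmin * ∑ s, d s * i s ≤ dmax * ∑ s, d s * i s := by
          gcongr
          nlinarith
      _ ≤ dmax * (ninf * (dmax * ∑ s, |emph γ P d i s|)) := by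
          gcongr
          · linarith
          · exact sum_mul_le_mul_sum_abs_emph hP hγ0 hγ1 hd hdmax hN
      _ = dmax ^ 2 * ninf * ∑ s, |emph γ P d i s| := by ring
  have hD : 0 < dmax ^ 2 * ninf * ∑ s, |emph γ P d i s| := by
    have : 0 < ninf := by linarith
    refine (by positivity : (0 : ℝ) ≤ _).lt_of_ne fun h0 => ?_
    rw [← h0, div_zero] at hn
    exact (pow_nonneg hγ0 _).not_gt hn
  rw [lt_div_iff₀ hD] at hn
  have hx := mul_nonneg (pow_nonneg hγ0 (n + 1)) hD.le
  have hc : 0 < κ * dmin := pos_of_mul_pos_left (hx.trans_lt hn) hidmin0.le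
  refine lt_of_mul_lt_mul_left ?_ hc.le
  nlinarith [mul_le_mul_of_nonneg_left hbound (pow_nonneg hγ0 (n + 1))]

end Emphasis

theorem projected_bellman_contraction_general
    {S : Type} [Fintype S] [DecidableEq S] {K : ℕ}
    (γ : ℝ) (hγ0 : 0 ≤ γ) (hγ1 : γ < 1)
    (P : Matrix S S ℝ) (hP0 : ∀ s s', 0 ≤ P s s') (hP1 : ∀ s, ∑ s', P s s' = 1)
    (d : S → ℝ) (hd : ∀ s, 0 < d s)
    (i : S → ℝ) (hi : ∀ s, 0 < i s)
    (dmax dmin : ℝ)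
    (hdmax : IsGreatest (Set.range d) dmax) (hdmin : IsLeast (Set.range d) dmin)
    (κ : ℝ)
    (hκ : IsLeast (Set.range fun s => d s * i s / (d s * emph γ P d i s)) κ)
    (idmin : ℝ)
    (hidmin : IsLeast (Set.range fun s => i s * d s) idmin)
    (ninf : ℝ)
    (hninf : IsGreatest (Set.range fun s => ∑ s', |(1 - γ • Pᵀ) s s'|) ninf)
    (n : ℕ)
    (hn : γ ^ (n + 1) < κ * dmin * idmin / (dmax ^ 2 * ninf * ∑ s, |emph γ P d i s|))
    (X : Matrix S (Fin K) ℝ)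
    (rπ : S → ℝ)
    (Proj : (S → ℝ) → (S → ℝ))
    (hProj : ∀ v : S → ℝ,
      (∃ w : Fin K → ℝ, Proj v = X.mulVec w) ∧
      ∀ w : Fin K → ℝ,
        ∑ s, (d s * truncEmph γ P d i n s) * (Proj v s - v s) ^ 2 ≤
          ∑ s, (d s * truncEmph γ P d i n s) * (X.mulVec w s - v s) ^ 2) :
    ∀ v₁ v₂ : S → ℝ,
      Real.sqrt (∑ s, (d s * truncEmph γ P d i n s) *
          (Proj (fun s => rπ s + γ * P.mulVec v₁ s) s -
           Proj (fun s => rπ s + γ * P.mulVec v₂ s) s) ^ 2) ≤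
        Real.sqrt γ *
          Real.sqrt (∑ s, (d s * truncEmph γ P d i n s) * (v₁ s - v₂ s) ^ 2) := by
  have hP : P ∈ rowStochastic ℝ S := mem_rowStochastic_iff_sum.2 ⟨hP0, hP1⟩
  have hq : 0 ≤ d * i := fun s => (mul_pos (hd s) (hi s)).le
  set W := d * truncEmph γ P d i n
  have hW : W = (∑ j ∈ range (n + 1), (γ • Pᵀ) ^ j) *ᵥ (d * i) :=
    mul_truncEmph (fun s => (hd s).ne') n
  have hW0 : 0 ≤ W := by
    rw [hW, sum_mulVec]
    exact sum_nonneg fun j _ => smul_transpose_pow_mulVec_nonneg hP hγ0 hq j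
  have hsub : (γ • Pᵀ) *ᵥ W ≤ W := by
    have hγq := pow_succ_mul_sum_mul_lt hP hγ0 hγ1 hd hi hdmax.2 hdmin hκ.2 hidmin.1 hninf.2 hn
    rw [hW]
    refine mulVec_geom_sum_mulVec_le fun s => ?_
    calc ((γ • Pᵀ) ^ (n + 1) *ᵥ (d * i)) s ≤ γ ^ (n + 1) * ∑ s, d s * i s :=
          smul_transpose_pow_mulVec_le hP hγ0 hq (n + 1) s
      _ ≤ d s * i s := hγq.le.trans ((hidmin.2 ⟨s, rfl⟩).trans_eq (mul_comm _ _))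
  have hmem : ∀ v, Proj v ∈ LinearMap.range X.mulVecLin := fun v => by
    obtain ⟨w, hw⟩ := (hProj v).1
    exact ⟨w, hw.symm⟩
  have hmin : ∀ v, ∀ y ∈ LinearMap.range X.mulVecLin,
      weightedSqNorm W (Proj v - v) ≤ weightedSqNorm W (y - v) := by
    rintro v _ ⟨w, rfl⟩
    exact (hProj v).2 w
  intro v₁ v₂
  rw [← Real.sqrt_mul hγ0]
  refine Real.sqrt_le_sqrt ?_
  calc weightedSqNorm W (Proj _ - Proj _)
      ≤ weightedSqNorm W (γ • P *ᵥ (v₁ - v₂)) := by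
        refine (weightedSqNorm_map_sub_le hW0 hmem hmin _ _).trans_eq ?_
        congr 1
        ext s
        simp only [Pi.sub_apply, Pi.smul_apply, mulVec_sub, smul_eq_mul]
        ring
    _ ≤ γ * weightedSqNorm W (v₁ - v₂) := weightedSqNorm_smul_mulVec_le hP hγ0 hW0 hsub _

/-- under the truncation-length condition of Lemma 6 and full column rank
of `X`, the projected Bellman operator `Π_{f_n} T_π` is a `√γ`-contraction in `‖·‖_{f_n}`.
The projection `Proj` is characterized as the `‖·‖_{f_n}`-closest point in the column
space of `X`. -/
theorem projected_bellman_contraction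
    {S : Type} [Fintype S] [DecidableEq S] {K : ℕ}
    (γ : ℝ) (hγ0 : 0 ≤ γ) (hγ1 : γ < 1)
    (P : Matrix S S ℝ) (hP0 : ∀ s s', 0 ≤ P s s') (hP1 : ∀ s, ∑ s', P s s' = 1)
    (d : S → ℝ) (hd : ∀ s, 0 < d s) (hdsum : ∑ s, d s = 1)
    (i : S → ℝ) (hi : ∀ s, 0 < i s)
    (dmax dmin : ℝ)
    (hdmax : IsGreatest (Set.range d) dmax) (hdmin : IsLeast (Set.range d) dmin)
    (κ : ℝ)
    (hκ : IsLeast (Set.range fun s => d s * i s / (d s * emph γ P d i s)) κ)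
    (idmin : ℝ)
    (hidmin : IsLeast (Set.range fun s => i s * d s) idmin)
    (ninf : ℝ)
    (hninf : IsGreatest (Set.range fun s => ∑ s', |(1 - γ • Pᵀ) s s'|) ninf)
    (n : ℕ)
    (hn : γ ^ (n + 1) < κ * dmin * idmin / (dmax ^ 2 * ninf * ∑ s, |emph γ P d i s|))
    (X : Matrix S (Fin K) ℝ) (hX : Function.Injective X.mulVec)
    (rπ : S → ℝ)
    (Proj : (S → ℝ) → (S → ℝ))
    (hProj : ∀ v : S → ℝ,
      (∃ w : Fin K → ℝ, Proj v = X.mulVec w) ∧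
      ∀ w : Fin K → ℝ,
        ∑ s, (d s * truncEmph γ P d i n s) * (Proj v s - v s) ^ 2 ≤
          ∑ s, (d s * truncEmph γ P d i n s) * (X.mulVec w s - v s) ^ 2) :
    ∀ v₁ v₂ : S → ℝ,
      Real.sqrt (∑ s, (d s * truncEmph γ P d i n s) *
          (Proj (fun s => rπ s + γ * P.mulVec v₁ s) s -
           Proj (fun s => rπ s + γ * P.mulVec v₂ s) s) ^ 2) ≤
        Real.sqrt γ *
          Real.sqrt (∑ s, (d s * truncEmph γ P d i n s) * (v₁ s - v₂ s) ^ 2) :=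
  projected_bellman_contraction_general γ hγ0 hγ1 P hP0 hP1 d hd i hi dmax dmin hdmax hdmin κ hκ
    idmin hidmin ninf hninf n hn X rπ Proj hProj

end
end
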